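/- arXiv:2001.02817 — 10 statements merged into one kernel-verified Lean document; each statement's English description precedes it below -/
import Mathlib

section
/- Let U be a finite set, V ⊆ U a fixed subset, and f : 2^U → ℝ a submodular function. Define g : 2^V → ℝ by g(X) = min over all Y ⊆ U with Y ∩ V = X of f(Y). Then g is submodular; that is, for all A, B ⊆ V, g(A ∩ B) + g(A ∪ B) ≤ g(A) + g(B). -/
/-- If `f` is a submodular function on subsets of a finite set `U`
(here the whole universe of a fintype) and, for `X ⊆ V`,
`g X` is the minimum of `f Y` over all `Y ⊆ U` with `Y ∩ V = X`,
then `g` is submodular on subsets of `V`. -/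
theorem stmt_0 {α : Type*} [Fintype α] [DecidableEq α] (V : Finset α)
    (f : Finset α → ℝ)
    (hf : ∀ A B : Finset α, f (A ∩ B) + f (A ∪ B) ≤ f A + f B)
    (g : Finset α → ℝ)
    (hg : ∀ X : Finset α, X ⊆ V →
      IsLeast {r : ℝ | ∃ Y : Finset α, Y ∩ V = X ∧ f Y = r} (g X))
    (A B : Finset α) (hA : A ⊆ V) (hB : B ⊆ V) :
    g (A ∩ B) + g (A ∪ B) ≤ g A + g B := by
  obtain ⟨⟨YA, hYA, hfA⟩, -⟩ := hg A hA
  obtain ⟨⟨YB, hYB, hfB⟩, -⟩ := hg B hB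
  have h1 : g (A ∩ B) ≤ f (YA ∩ YB) := by
    refine (hg (A ∩ B) (fun x hx => hA (Finset.mem_of_mem_inter_left hx))).2 ?_
    exact ⟨YA ∩ YB, by rw [← hYA, ← hYB, Finset.inter_inter_inter_comm, Finset.inter_self], rfl⟩
  have h2 : g (A ∪ B) ≤ f (YA ∪ YB) := by
    refine (hg (A ∪ B) (Finset.union_subset hA hB)).2 ?_
    exact ⟨YA ∪ YB, by rw [← hYA, ← hYB, Finset.union_inter_distrib_right], rfl⟩
  calc g (A ∩ B) + g (A ∪ B) ≤ f (YA ∩ YB) + f (YA ∪ YB) := add_le_add h1 h2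
    _ ≤ f YA + f YB := hf YA YB
    _ = g A + g B := by rw [hfA, hfB]
end

section
/- Let V' be a finite set, e ⊆ V' a fixed subset, and w : V' × V' → ℝ a nonnegative weight function (interpreted as weights on directed edges). Define the directed cut function cut(T) = Σ_{i ∈ T} Σ_{j ∈ V' \ T} w(i,j) for T ⊆ V', and define the gadget splitting function ŵ : 2^e → ℝ by ŵ(S) = min over all T ⊆ V' with T ∩ e = S of cut(T). Then ŵ is submodular: for all A, B ⊆ e, ŵ(A ∩ B) + ŵ(A ∪ B) ≤ ŵ(A) + ŵ(B). -/
/-- The directed cut function of a weighted directed graph on vertex set `α`: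
`dirCut w T = Σ_{i ∈ T} Σ_{j ∉ T} w i j`. -/
def dirCut {α : Type*} [Fintype α] [DecidableEq α] (w : α → α → ℝ) (T : Finset α) : ℝ :=
  ∑ i ∈ T, ∑ j ∈ Tᶜ, w i j

lemma dirCut_eq {α : Type*} [Fintype α] [DecidableEq α] (w : α → α → ℝ) (T : Finset α) :
    dirCut w T = ∑ i, ∑ j, if i ∈ T ∧ j ∉ T then w i j else 0 := by
  rw [dirCut]
  rw [← Finset.sum_filter_add_sum_filter_not Finset.univ (· ∈ T)]
  simp only [Finset.sum_ite_of_false, Finset.sum_filter]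
  have h1 : ∀ i, (if i ∈ T then ∑ j, if i ∈ T ∧ j ∉ T then w i j else 0 else 0)
      = if i ∈ T then ∑ j ∈ Tᶜ, w i j else 0 := by
    intro i
    by_cases hi : i ∈ T
    · simp only [hi, if_true, true_and]
      rw [← Finset.sum_filter]
      congr 1
      ext x; simp [Finset.mem_compl]
    · simp [hi]
  have h2 : ∀ i, (if ¬ i ∈ T then ∑ j, if i ∈ T ∧ j ∉ T then w i j else 0 else 0) = 0 := by
    intro i
    by_cases hi : i ∈ T <;> simp [hi]
  rw [Finset.sum_congr rfl fun i _ => h1 i, Finset.sum_congr rfl fun i _ => h2 i]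
  simp [Finset.sum_ite_mem]

lemma dirCut_submodular {α : Type*} [Fintype α] [DecidableEq α] (w : α → α → ℝ)
    (hw : ∀ i j, 0 ≤ w i j) (T U : Finset α) :
    dirCut w (T ∩ U) + dirCut w (T ∪ U) ≤ dirCut w T + dirCut w U := by
  simp only [dirCut_eq, ← Finset.sum_add_distrib]
  apply Finset.sum_le_sum
  intro i _
  apply Finset.sum_le_sum
  intro j _
  by_cases hiT : i ∈ T <;> by_cases hiU : i ∈ U <;> by_cases hjT : j ∈ T <;>
    by_cases hjU : j ∈ U <;>
    simp [Finset.mem_inter, Finset.mem_union, hiT, hiU, hjT, hjU, hw i j]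

/-- The gadget splitting function `ŵ(S) = min_{T : T ∩ e = S} cut(T)`
of a hyperedge s-t cut gadget with nonnegative directed edge weights is submodular. -/
theorem stmt_1 {α : Type*} [Fintype α] [DecidableEq α] (e : Finset α)
    (w : α → α → ℝ) (hw : ∀ i j, 0 ≤ w i j)
    (what : Finset α → ℝ)
    (hwhat : ∀ S : Finset α, S ⊆ e →
      IsLeast {r : ℝ | ∃ T : Finset α, T ∩ e = S ∧ dirCut w T = r} (what S))
    (A B : Finset α) (hA : A ⊆ e) (hB : B ⊆ e) :
    what (A ∩ B) + what (A ∪ B) ≤ what A + what B := by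
  obtain ⟨⟨TA, hTA, hcA⟩, -⟩ := hwhat A hA
  obtain ⟨⟨TB, hTB, hcB⟩, -⟩ := hwhat B hB
  have hint : (TA ∩ TB) ∩ e = A ∩ B := by
    rw [← hTA, ← hTB]; ext x; simp only [Finset.mem_inter]; tauto
  have hun : (TA ∪ TB) ∩ e = A ∪ B := by
    rw [← hTA, ← hTB]; ext x; simp only [Finset.mem_inter, Finset.mem_union]; tauto
  obtain ⟨-, hlbI⟩ := hwhat (A ∩ B) (Finset.inter_subset_left.trans hA)
  obtain ⟨-, hlbU⟩ := hwhat (A ∪ B) (Finset.union_subset hA hB)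
  have h1 : what (A ∩ B) ≤ dirCut w (TA ∩ TB) := hlbI ⟨TA ∩ TB, hint, rfl⟩
  have h2 : what (A ∪ B) ≤ dirCut w (TA ∪ TB) := hlbU ⟨TA ∪ TB, hun, rfl⟩
  have h3 := dirCut_submodular w hw TA TB
  rw [hcA, hcB] at h3
  linarith
end

section
/- Let e be a finite set of r ≥ 4 nodes and q = ⌊r/2⌋. Let f : 2^e → ℝ be a cardinality-based splitting function, i.e., f(S) = w_{min(|S|, |e \ S|)} for a sequence of penalties w_0 = 0, w_1, …, w_q. If f is submodular, then the penalties satisfy: (i) 2w_1 ≥ w_2; (ii) 2w_j ≥ w_{j−1} + w_{j+1} for all j with 2 ≤ j ≤ q−1; and (iii) 0 ≤ w_1 ≤ w_2 ≤ … ≤ w_q. -/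
/-!
Writing `f S = g |S|` with `g m = w (min m (r - m))`, submodularity applied to two `(i+1)`-sets
meeting in `i` points gives the discrete concavity `g i + g (i + 2) ≤ 2 g (i + 1)`; this is (i)
and (ii). Concavity makes the increments `g (m + 1) - g m` nonincreasing, while the symmetry
`g (r - m) = g m` makes the increment at `r - 1 - m` the negative of the one at `m`, so the
increments are nonnegative up to `⌊r/2⌋`; with `g 0 = w 0 = 0` this is (iii).
-/

open Finset

theorem Finset.exists_card_inter_eq_card_union_eq {α : Type*} [Fintype α] [DecidableEq α]
    (i k : ℕ) (h : i + 2 * k ≤ Fintype.card α) :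
    ∃ A B : Finset α, #A = i + k ∧ #B = i + k ∧ #(A ∩ B) = i ∧ #(A ∪ B) = i + 2 * k := by
  obtain ⟨C, -, hC⟩ := exists_subset_card_eq (s := (univ : Finset α)) (by simpa using h)
  obtain ⟨A, hAC, hA⟩ := exists_subset_card_eq (s := C) (n := i + k) (by omega)
  obtain ⟨I, hIA, hI⟩ := exists_subset_card_eq (s := A) (n := i) (by omega)
  have hinter : A ∩ (I ∪ (C \ A)) = I := by
    ext x; simp only [mem_inter, mem_union, mem_sdiff]; grind
  have hunion : A ∪ (I ∪ (C \ A)) = C := by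
    ext x; simp only [mem_union, mem_sdiff]; grind
  have hB : #(I ∪ (C \ A)) = i + k := by
    rw [card_union_of_disjoint (disjoint_sdiff.mono_left hIA), card_sdiff_of_subset hAC]
    omega
  exact ⟨A, I ∪ (C \ A), hA, hB, by rw [hinter, hI], by rw [hunion, hC]⟩

theorem midpoint_concave_of_submodular_of_card {α : Type*} [Fintype α] [DecidableEq α]
    {f : Finset α → ℝ} {g : ℕ → ℝ} (hfg : ∀ S, f S = g #S)
    (hsub : ∀ A B : Finset α, f (A ∩ B) + f (A ∪ B) ≤ f A + f B)
    {i k : ℕ} (h : i + 2 * k ≤ Fintype.card α) :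
    g i + g (i + 2 * k) ≤ 2 * g (i + k) := by
  obtain ⟨A, B, hA, hB, hAB, hAuB⟩ := exists_card_inter_eq_card_union_eq i k h
  have := hsub A B
  rw [hfg, hfg, hfg, hfg, hA, hB, hAB, hAuB] at this
  linarith

section ConcaveSequence

variable {g : ℕ → ℝ} {n : ℕ}

theorem increment_antitone_of_concave
    (hconc : ∀ i, i + 2 ≤ n → g i + g (i + 2) ≤ 2 * g (i + 1))
    {m m' : ℕ} (hmm' : m ≤ m') (hm' : m' + 1 ≤ n) :
    g (m' + 1) - g m' ≤ g (m + 1) - g m := by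
  induction m', hmm' using Nat.le_induction with
  | base => rfl
  | succ m' _ ih =>
    have := hconc m' hm'
    linarith [ih (by omega)]

theorem le_succ_of_concave_of_symm
    (hconc : ∀ i, i + 2 ≤ n → g i + g (i + 2) ≤ 2 * g (i + 1))
    (hsymm : ∀ m ≤ n, g (n - m) = g m) {m : ℕ} (hm : 2 * (m + 1) ≤ n) :
    g m ≤ g (m + 1) := by
  have hdec := increment_antitone_of_concave hconc (m := m) (m' := n - (m + 1))
    (by omega) (by omega)
  have hmirror : n - (m + 1) + 1 = n - m := by omega
  rw [hmirror, hsymm m (by omega), hsymm (m + 1) (by omega)] at hdec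
  linarith

end ConcaveSequence

theorem stmt_3_general {α : Type*} [Fintype α] [DecidableEq α] (r : ℕ) (hr : 4 ≤ r)
    (hcard : Fintype.card α = r)
    (w : ℕ → ℝ) (hw0 : w 0 = 0)
    (f : Finset α → ℝ)
    (hf : ∀ S : Finset α, f S = w (min S.card (Sᶜ : Finset α).card))
    (hsub : ∀ A B : Finset α, f (A ∩ B) + f (A ∪ B) ≤ f A + f B) :
    2 * w 1 ≥ w 2 ∧
    (∀ j : ℕ, 2 ≤ j → j + 1 ≤ r / 2 → 2 * w j ≥ w (j - 1) + w (j + 1)) ∧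
    (0 ≤ w 1 ∧ ∀ j : ℕ, 1 ≤ j → j + 1 ≤ r / 2 → w j ≤ w (j + 1)) := by
  set g : ℕ → ℝ := fun m => w (min m (r - m))
  have hfg : ∀ S, f S = g #S := fun S => by rw [hf, card_compl, hcard]
  have hgw : ∀ m, 2 * m ≤ r → g m = w m := fun m hm => by
    simp only [g, min_eq_left (show m ≤ r - m by omega)]
  have hconc : ∀ i, i + 2 ≤ r → g i + g (i + 2) ≤ 2 * g (i + 1) := fun i hi =>
    midpoint_concave_of_submodular_of_card (k := 1) hfg hsub (by omega)
  have hsymm : ∀ m ≤ r, g (r - m) = g m := fun m hm => by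
    simp only [g, Nat.sub_sub_self hm, min_comm]
  have hmono : ∀ m, m + 1 ≤ r / 2 → w m ≤ w (m + 1) := fun m hm => by
    rw [← hgw m (by omega), ← hgw (m + 1) (by omega)]
    exact le_succ_of_concave_of_symm hconc hsymm (by omega)
  refine ⟨?_, fun j hj hjq => ?_, by simpa [hw0] using hmono 0 (by omega),
    fun j _ hjq => hmono j hjq⟩
  · have := hconc 0 (by omega)
    rw [hgw 0 (by omega), hgw 1 (by omega), hgw 2 (by omega), hw0] at this
    linarith
  · have := hconc (j - 1) (by omega)
    rw [show j - 1 + 1 = j by omega, show j - 1 + 2 = j + 1 by omega, hgw (j - 1) (by omega),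
      hgw j (by omega), hgw (j + 1) (by omega)] at this
    linarith

/-- a submodular cardinality-based splitting function on an `r`-node
hyperedge (`r ≥ 4`), with penalties `w i = f S` whenever `min |S| |e \ S| = i`,
satisfies `2w₁ ≥ w₂`, `2w_j ≥ w_{j-1} + w_{j+1}` for `2 ≤ j ≤ q - 1`, and
`0 ≤ w₁ ≤ w₂ ≤ ⋯ ≤ w_q`, where `q = ⌊r/2⌋`. -/
theorem stmt_3 {α : Type*} [Fintype α] [DecidableEq α] (r : ℕ) (hr : 4 ≤ r)
    (hcard : Fintype.card α = r)
    (w : ℕ → ℝ) (hw0 : w 0 = 0)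
    (f : Finset α → ℝ)
    (hf : ∀ S : Finset α, f S = w (min S.card (Sᶜ : Finset α).card))
    (hnn : ∀ S : Finset α, 0 ≤ f S)
    (hsub : ∀ A B : Finset α, f (A ∩ B) + f (A ∪ B) ≤ f A + f B) :
    2 * w 1 ≥ w 2 ∧
    (∀ j : ℕ, 2 ≤ j → j + 1 ≤ r / 2 → 2 * w j ≥ w (j - 1) + w (j + 1)) ∧
    (0 ≤ w 1 ∧ ∀ j : ℕ, 1 ≤ j → j + 1 ≤ r / 2 → w j ≤ w (j + 1)) :=
  stmt_3_general r hr hcard w hw0 f hf hsub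
end

section
/- Let q ≥ 1 and let w_1, …, w_q be real numbers satisfying 2w_1 ≥ w_2, 2w_j ≥ w_{j−1} + w_{j+1} for 2 ≤ j ≤ q−1, and 0 ≤ w_1 ≤ w_2 ≤ … ≤ w_q. Then there exist nonnegative real numbers c_1, …, c_q such that for every i ∈ {1, …, q}, Σ_{j=1}^{q} min(i, j) · c_j = w_i. Conversely, for any nonnegative c_1, …, c_q, the numbers w_i = Σ_{j=1}^{q} min(i, j) · c_j satisfy all of the above inequalities. -/
-- Forward direction as a standalone lemma with v 0 = 0.
theorem fwd (q : ℕ) (hq : 1 ≤ q) (v : ℕ → ℝ) (hv0 : v 0 = 0)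
    (hconc : ∀ j : ℕ, 1 ≤ j → j + 1 ≤ q → 2 * v j ≥ v (j - 1) + v (j + 1))
    (hmono : ∀ j : ℕ, j + 1 ≤ q → v j ≤ v (j + 1)) :
    ∃ c : ℕ → ℝ,
      (∀ j : ℕ, 1 ≤ j → j ≤ q → 0 ≤ c j) ∧
      (∀ i : ℕ, i ≤ q →
        ∑ j ∈ Finset.Icc 1 q, ((min i j : ℕ) : ℝ) * c j = v i) := by
  set c : ℕ → ℝ := fun j => if j < q then 2 * v j - v (j - 1) - v (j + 1) else v j - v (j - 1)
    with hc
  have hnn : ∀ j : ℕ, 1 ≤ j → j ≤ q → 0 ≤ c j := by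
    intro j h1 h2
    by_cases h : j < q
    · have := hconc j h1 h
      simp only [hc, if_pos h]
      linarith
    · have hjq : j = q := by omega
      have := hmono (j - 1) (by omega)
      have hj1 : j - 1 + 1 = j := by omega
      rw [hj1] at this
      simp only [hc, if_neg h]
      linarith
  have tele : ∀ k : ℕ, 1 ≤ k → k ≤ q → ∑ j ∈ Finset.Icc k q, c j = v k - v (k - 1) := by
    intro k h1 h2
    obtain ⟨t, ht⟩ : ∃ t, k = q - t ∧ t ≤ q - 1 := ⟨q - k, by omega⟩
    obtain ⟨rfl, ht⟩ := ht
    clear h1 h2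
    induction t with
    | zero =>
      simp only [Nat.sub_zero, Finset.Icc_self, Finset.sum_singleton]
      simp [hc]
    | succ t ih =>
      have ht' : t ≤ q - 1 := by omega
      have hins : Finset.Icc (q - (t + 1)) q = insert (q - (t+1)) (Finset.Icc (q - t) q) := by
        ext x
        simp only [Finset.mem_Icc, Finset.mem_insert]
        omega
      rw [hins, Finset.sum_insert (by simp only [Finset.mem_Icc]; omega), ih ht']
      have hlt : q - (t + 1) < q := by omega
      simp only [hc, if_pos hlt]
      have h1 : q - (t + 1) + 1 = q - t := by omega
      have h2 : q - t - 1 = q - (t + 1) := by omega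
      rw [h1, h2]
      ring
  refine ⟨c, hnn, ?_⟩
  intro i hi
  induction i with
  | zero => simp [hv0]
  | succ i ih =>
    have hiq : i ≤ q := by omega
    have step : ∑ j ∈ Finset.Icc 1 q, ((min (i+1) j : ℕ) : ℝ) * c j
        = (∑ j ∈ Finset.Icc 1 q, ((min i j : ℕ) : ℝ) * c j) + ∑ j ∈ Finset.Icc (i+1) q, c j := by
      have hfil : Finset.Icc (i+1) q = (Finset.Icc 1 q).filter (fun j => i+1 ≤ j) := by
        ext x; simp only [Finset.mem_Icc, Finset.mem_filter]; omega
      rw [hfil, Finset.sum_filter, ← Finset.sum_add_distrib]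
      apply Finset.sum_congr rfl
      intro j hj
      rw [Finset.mem_Icc] at hj
      by_cases h : i + 1 ≤ j
      · have hm : min (i+1) j = min i j + 1 := by omega
        rw [if_pos h, hm]
        push_cast
        ring
      · have hm : min (i+1) j = min i j := by omega
        rw [if_neg h, hm]
        ring
    rw [step, ih hiq, tele (i+1) (by omega) hi]
    have : i + 1 - 1 = i := by omega
    rw [this]
    ring



/-- penalties `w₁, …, w_q` satisfy the submodularity-type inequalities
`2w₁ ≥ w₂`, `2w_j ≥ w_{j-1} + w_{j+1}` (for `2 ≤ j ≤ q-1`) and `0 ≤ w₁ ≤ ⋯ ≤ w_q`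
if and only if they are a nonnegative combination `w_i = Σ_j min(i,j) c_j` with `c_j ≥ 0`. -/
theorem stmt_4 (q : ℕ) (hq : 1 ≤ q) :
    (∀ w : ℕ → ℝ,
      (2 ≤ q → 2 * w 1 ≥ w 2) →
      (∀ j : ℕ, 2 ≤ j → j + 1 ≤ q → 2 * w j ≥ w (j - 1) + w (j + 1)) →
      0 ≤ w 1 →
      (∀ j : ℕ, 1 ≤ j → j + 1 ≤ q → w j ≤ w (j + 1)) →
      ∃ c : ℕ → ℝ,
        (∀ j : ℕ, 1 ≤ j → j ≤ q → 0 ≤ c j) ∧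
        (∀ i : ℕ, 1 ≤ i → i ≤ q →
          ∑ j ∈ Finset.Icc 1 q, ((min i j : ℕ) : ℝ) * c j = w i)) ∧
    (∀ c : ℕ → ℝ, (∀ j : ℕ, 1 ≤ j → j ≤ q → 0 ≤ c j) →
      ∀ w : ℕ → ℝ,
      (∀ i : ℕ, 1 ≤ i → i ≤ q →
        w i = ∑ j ∈ Finset.Icc 1 q, ((min i j : ℕ) : ℝ) * c j) →
      (2 ≤ q → 2 * w 1 ≥ w 2) ∧
      (∀ j : ℕ, 2 ≤ j → j + 1 ≤ q → 2 * w j ≥ w (j - 1) + w (j + 1)) ∧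
      0 ≤ w 1 ∧
      (∀ j : ℕ, 1 ≤ j → j + 1 ≤ q → w j ≤ w (j + 1))) := by
  constructor
  · intro w h1 h2 h3 h4
    set v : ℕ → ℝ := fun i => if i = 0 then 0 else w i with hvdef
    have hv0 : v 0 = 0 := by simp [hvdef]
    have hveq : ∀ i, 1 ≤ i → v i = w i := by
      intro i hi
      simp only [hvdef]
      rw [if_neg (by omega : ¬ i = 0)]
    have hconc : ∀ j : ℕ, 1 ≤ j → j + 1 ≤ q → 2 * v j ≥ v (j - 1) + v (j + 1) := by
      intro j hj hjq
      rcases Nat.eq_or_lt_of_le hj with h | h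
      · subst h
        rw [hveq 1 le_rfl]
        simp only [hvdef]
        norm_num
        have := h1 (by omega)
        linarith
      · have hj2 : 2 ≤ j := h
        rw [hveq j (by omega), hveq (j-1) (by omega), hveq (j+1) (by omega)]
        exact h2 j hj2 hjq
    have hmono : ∀ j : ℕ, j + 1 ≤ q → v j ≤ v (j + 1) := by
      intro j hjq
      rcases Nat.eq_zero_or_pos j with h | h
      · subst h; rw [hv0, hveq 1 le_rfl]; exact h3
      · rw [hveq j h, hveq (j+1) (by omega)]; exact h4 j h hjq
    obtain ⟨c, hc1, hc2⟩ := fwd q hq v hv0 hconc hmono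
    exact ⟨c, hc1, fun i hi1 hi2 => by rw [hc2 i hi2, hveq i hi1]⟩
  · intro c hc w hw
    have hnn : ∀ i, 1 ≤ i → i ≤ q → 0 ≤ w i := by
      intro i hi1 hi2
      rw [hw i hi1 hi2]
      apply Finset.sum_nonneg
      intro j hj
      rw [Finset.mem_Icc] at hj
      exact mul_nonneg (by positivity) (hc j hj.1 hj.2)
    refine ⟨?_, ?_, hnn 1 le_rfl hq, ?_⟩
    · intro h2q
      rw [ge_iff_le, hw 1 le_rfl hq, hw 2 (by omega) h2q, Finset.mul_sum]
      apply Finset.sum_le_sum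
      intro j hj
      rw [Finset.mem_Icc] at hj
      rw [← mul_assoc]
      apply mul_le_mul_of_nonneg_right _ (hc j hj.1 hj.2)
      have : (min 2 j : ℕ) ≤ 2 * min 1 j := by omega
      calc ((min 2 j : ℕ) : ℝ) ≤ ((2 * min 1 j : ℕ) : ℝ) := by exact_mod_cast this
        _ = 2 * ((min 1 j : ℕ) : ℝ) := by push_cast; ring
    · intro j hj2 hjq
      rw [ge_iff_le, hw j (by omega) (by omega), hw (j-1) (by omega) (by omega),
        hw (j+1) (by omega) hjq, Finset.mul_sum, ← Finset.sum_add_distrib]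
      apply Finset.sum_le_sum
      intro k hk
      rw [Finset.mem_Icc] at hk
      rw [← mul_assoc, ← add_mul]
      apply mul_le_mul_of_nonneg_right _ (hc k hk.1 hk.2)
      have : (min (j-1) k : ℕ) + min (j+1) k ≤ 2 * min j k := by omega
      calc ((min (j-1) k : ℕ) : ℝ) + ((min (j+1) k : ℕ) : ℝ)
          = (((min (j-1) k + min (j+1) k : ℕ)) : ℝ) := by push_cast; ring
        _ ≤ ((2 * min j k : ℕ) : ℝ) := by exact_mod_cast this
        _ = 2 * ((min j k : ℕ) : ℝ) := by push_cast; ring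
    · intro j hj1 hjq
      rw [hw j hj1 (by omega), hw (j+1) (by omega) hjq]
      apply Finset.sum_le_sum
      intro k hk
      rw [Finset.mem_Icc] at hk
      apply mul_le_mul_of_nonneg_right _ (hc k hk.1 hk.2)
      exact_mod_cast (by omega : min j k ≤ min (j+1) k)
end

section
/- Let e be a finite set of r ≥ 3 nodes and let f : 2^e → ℝ be an asymmetric cardinality-based splitting function, i.e., f is nonnegative, f(∅) = f(e) = 0, and f(S) = y_{|S|} for penalties y_1, …, y_{r−1}. If f is submodular, then the penalties satisfy: 2y_1 ≥ y_2; 2y_j ≥ y_{j−1} + y_{j+1} for all j with 2 ≤ j ≤ r−3; and 2y_{r−2} ≥ y_{r−1}. -/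
/-- a submodular asymmetric cardinality-based splitting function on an
`r`-node hyperedge (`r ≥ 3`), with `f S = y_{|S|}`, nonnegative and with
`y 0 = y r = 0`, has penalties satisfying `2y₁ ≥ y₂`,
`2y_j ≥ y_{j-1} + y_{j+1}` for `2 ≤ j ≤ r-3`, and `2y_{r-2} ≥ y_{r-1}`. -/
theorem stmt_6 {α : Type*} [Fintype α] [DecidableEq α] (r : ℕ) (hr : 3 ≤ r)
    (hcard : Fintype.card α = r)
    (y : ℕ → ℝ) (hy0 : y 0 = 0) (hyr : y r = 0)
    (f : Finset α → ℝ) (hf : ∀ S : Finset α, f S = y S.card)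
    (hnn : ∀ S : Finset α, 0 ≤ f S)
    (hsub : ∀ A B : Finset α, f (A ∩ B) + f (A ∪ B) ≤ f A + f B) :
    2 * y 1 ≥ y 2 ∧
    (∀ j : ℕ, 2 ≤ j → j ≤ r - 3 → 2 * y j ≥ y (j - 1) + y (j + 1)) ∧
    2 * y (r - 2) ≥ y (r - 1) := by
  have huniv : (Finset.univ : Finset α).card = r := by
    simpa [Finset.card_univ] using hcard
  -- nonnegativity of y i for i ≤ r
  have hynn : ∀ i : ℕ, i ≤ r → 0 ≤ y i := by
    intro i hi
    obtain ⟨S, -, hS⟩ := Finset.exists_subset_card_eq (huniv ▸ hi : i ≤ (Finset.univ : Finset α).card)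
    have := hnn S
    rwa [hf, hS] at this
  -- key concavity inequality
  have key : ∀ k : ℕ, 1 ≤ k → k + 1 ≤ r → y (k - 1) + y (k + 1) ≤ 2 * y k := by
    intro k hk1 hkr
    obtain ⟨S, -, hS⟩ := Finset.exists_subset_card_eq
      (huniv ▸ hkr : k + 1 ≤ (Finset.univ : Finset α).card)
    obtain ⟨T, hTS, hT⟩ := Finset.exists_subset_card_eq (show k - 1 ≤ S.card by omega)
    have hsd : (S \ T).card = 2 := by
      rw [Finset.card_sdiff_of_subset hTS, hS, hT]; omega
    obtain ⟨a, ha, b, hb, hab⟩ := Finset.one_lt_card.mp (by omega : 1 < (S \ T).card)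
    have haT : a ∉ T := (Finset.mem_sdiff.mp ha).2
    have hbT : b ∉ T := (Finset.mem_sdiff.mp hb).2
    set A := insert a T with hA
    set B := insert b T with hB
    have hAcard : A.card = k := by rw [hA, Finset.card_insert_of_notMem haT, hT]; omega
    have hBcard : B.card = k := by rw [hB, Finset.card_insert_of_notMem hbT, hT]; omega
    have hint : A ∩ B = T := by
      ext x
      simp only [hA, hB, Finset.mem_inter, Finset.mem_insert]
      constructor
      · rintro ⟨h1 | h1, h2 | h2⟩ <;> first | assumption | (exfalso; subst h1; subst h2; exact hab rfl) <;> try assumption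
      · intro hx; exact ⟨Or.inr hx, Or.inr hx⟩
    have hU : A ∪ B = insert a (insert b T) := by
      ext x
      simp only [hA, hB, Finset.mem_union, Finset.mem_insert]
      tauto
    have hunion : (A ∪ B).card = k + 1 := by
      rw [hU, Finset.card_insert_of_notMem, Finset.card_insert_of_notMem hbT, hT]
      · omega
      · simp only [Finset.mem_insert]
        rintro (h | h)
        · exact hab h
        · exact haT h
    have := hsub A B
    rw [hf, hf, hf, hf, hint, hT, hunion, hAcard, hBcard] at this
    linarith
  refine ⟨?_, ?_, ?_⟩
  · have := key 1 le_rfl (by omega)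
    simp only [Nat.sub_self, hy0] at this
    linarith
  · intro j hj2 hj3
    exact key j (by omega) (by omega)
  · have h := key (r - 2) (by omega) (by omega)
    have h2 : r - 2 + 1 = r - 1 := by omega
    have h3 : 0 ≤ y (r - 2 - 1) := hynn _ (by omega)
    rw [h2] at h
    linarith
end

section
/- Let e be a finite set of r ≥ 1 nodes and a, b nonnegative reals. Form the asymmetric star gadget: a directed graph on node set V' = e ∪ {v_e} with one auxiliary node, having for each v ∈ e a directed edge (v, v_e) of weight a and a directed edge (v_e, v) of weight b. Then for every S ⊆ e, the gadget splitting function satisfies ŷ(S) = min over T ⊆ V' with T ∩ e = S of cut(T) = min { |S| · a, |e \ S| · b }, where cut(T) = Σ_{i ∈ T, j ∉ T} (weight of directed edge from i to j). -/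
/-- Edge weights of the asymmetric star gadget on node set `β ⊕ Unit`, where
`Sum.inr ()` is the auxiliary node `v_e`: each `v ∈ e` has a directed edge of
weight `a` to `v_e`, and `v_e` has a directed edge of weight `b` to each `v ∈ e`. -/
def starWeight {β : Type*} (a b : ℝ) : (β ⊕ Unit) → (β ⊕ Unit) → ℝ
  | Sum.inl _, Sum.inr _ => a
  | Sum.inr _, Sum.inl _ => b
  | _, _ => 0

lemma sum_mem_to_univ {α : Type*} [Fintype α] [DecidableEq α] (s : Finset α) (f : α → ℝ) :
    ∑ i ∈ s, f i = ∑ i : α, if i ∈ s then f i else 0 := by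
  rw [Finset.sum_ite_mem, Finset.univ_inter]

lemma starCut {β : Type*} [Fintype β] [DecidableEq β]
    (a b : ℝ) (S : Finset β) (T : Finset (β ⊕ Unit))
    (h : ∀ v : β, Sum.inl v ∈ T ↔ v ∈ S) :
    dirCut (starWeight a b) T =
      if Sum.inr () ∈ T then ((Sᶜ : Finset β).card : ℝ) * b else (S.card : ℝ) * a := by
  unfold dirCut
  rw [sum_mem_to_univ]
  rw [Fintype.sum_sum_type]
  have hinner1 : ∀ v : β, ∑ j ∈ Tᶜ, starWeight a b (Sum.inl v) j =
      if Sum.inr () ∈ T then 0 else a := by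
    intro v
    have : ∀ j : β ⊕ Unit, starWeight a b (Sum.inl v) j =
        if j = Sum.inr () then a else 0 := by
      rintro (u | ⟨⟩) <;> simp [starWeight]
    simp only [this]
    rw [Finset.sum_ite_eq' Tᶜ (Sum.inr ()) (fun _ => a)]
    simp [Finset.mem_compl]
  have hinner2 : ∑ j ∈ Tᶜ, starWeight a b (Sum.inr ()) j = ((Sᶜ : Finset β).card : ℝ) * b := by
    rw [sum_mem_to_univ, Fintype.sum_sum_type]
    have h1 : ∀ v : β, (if Sum.inl v ∈ Tᶜ then starWeight a b (Sum.inr ()) (Sum.inl v) else 0)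
        = if v ∈ Sᶜ then b else 0 := by
      intro v
      simp [starWeight, Finset.mem_compl, h v]
    have h2 : ∀ u : Unit, (if (Sum.inr u : β ⊕ Unit) ∈ Tᶜ then starWeight a b (Sum.inr () : β ⊕ Unit) (Sum.inr u) else 0)
        = 0 := by
      intro u; simp [starWeight]
    simp only [h1, h2, Finset.sum_const_zero, add_zero, Finset.sum_ite_mem,
      Finset.univ_inter, Finset.sum_const, nsmul_eq_mul]
  have h1 : ∀ v : β, (if Sum.inl v ∈ T then ∑ j ∈ Tᶜ, starWeight a b (Sum.inl v) j else 0)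
      = if v ∈ S then (if Sum.inr () ∈ T then 0 else a) else 0 := by
    intro v; rw [hinner1 v]; simp [h v]
  simp only [h1]
  rw [Finset.sum_ite_mem, Finset.univ_inter, Finset.sum_const, nsmul_eq_mul]
  by_cases hr : Sum.inr () ∈ T <;> simp [hr, hinner2, mul_comm]

/-- the gadget splitting function of the asymmetric star gadget with
parameters `a, b ≥ 0` is `ŷ(S) = min {|S|·a, |e \ S|·b}`. -/
theorem stmt_7 {β : Type*} [Fintype β] [DecidableEq β] (hβ : 1 ≤ Fintype.card β)
    (a b : ℝ) (ha : 0 ≤ a) (hb : 0 ≤ b) (S : Finset β) :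
    IsLeast {r : ℝ | ∃ T : Finset (β ⊕ Unit),
        (∀ v : β, Sum.inl v ∈ T ↔ v ∈ S) ∧ dirCut (starWeight a b) T = r}
      (min ((S.card : ℝ) * a) (((Sᶜ : Finset β).card : ℝ) * b)) := by
  constructor
  · rcases le_total ((S.card : ℝ) * a) (((Sᶜ : Finset β).card : ℝ) * b) with hle | hle
    · refine ⟨S.image Sum.inl, ?_, ?_⟩
      · intro v; simp
      · rw [starCut a b S _ (by intro v; simp)]
        simp [min_eq_left hle]
    · refine ⟨insert (Sum.inr ()) (S.image Sum.inl), ?_, ?_⟩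
      · intro v; simp
      · rw [starCut a b S _ (by intro v; simp)]
        simp [min_eq_right hle]
  · rintro r ⟨T, hT, rfl⟩
    rw [starCut a b S T hT]
    by_cases hr : Sum.inr () ∈ T <;> simp [hr, min_le_left, min_le_right]
end

section
/- Let Ĝ = (V̂, Ê) be a finite undirected graph and let w_1, w_2 be reals with 0 ≤ w_2 < w_1. Construct a hypergraph on node set V̂ ∪ {s, t} with one 4-node hyperedge h_{uv} = {s, t, u, v} for each edge (u, v) ∈ Ê, and give each hyperedge the cardinality-based splitting function assigning penalty w_1 to splits with one node on the small side, penalty w_2 to splits with two nodes on each side, and 0 when not split. Then for every S ⊆ V̂, the hypergraph cut value of S ∪ {s} (the sum over hyperedges e of the splitting penalty of e ∩ (S ∪ {s})) equals w_2 · |∂S| + w_1 · (|Ê| − |∂S|), where ∂S is the set of edges of Ĝ with exactly one endpoint in S. Consequently, S maximizes |∂S| over subsets of V̂ if and only if S ∪ {s} minimizes the hypergraph cut value over all sets containing s and not t. -/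
/-- the MaxCut reduction. Given a graph `Ĝ` with edge set `Ehat`
(2-element subsets of `β`), build a hypergraph on `β ⊕ Fin 2` (where `s = inr 0`,
`t = inr 1`) with a 4-node hyperedge `{s, t, u, v}` for each edge `{u, v}`, carrying
the cardinality-based splitting function with penalties `w₁ > w₂ ≥ 0`. Then the
hypergraph cut value of `S ∪ {s}` equals `w₂·|∂S| + w₁·(|Ê| − |∂S|)`, and `S`
maximizes `|∂S|` iff `S ∪ {s}` minimizes the cut over all sets containing `s`
but not `t`. -/
theorem stmt_12 {β : Type*} [Fintype β] [DecidableEq β]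
    (Ehat : Finset (Finset β)) (hE : ∀ p ∈ Ehat, p.card = 2)
    (w1 w2 : ℝ) (hw2 : 0 ≤ w2) (hlt : w2 < w1)
    (pen : ℕ → ℝ) (hpen0 : pen 0 = 0) (hpen1 : pen 1 = w1) (hpen2 : pen 2 = w2)
    (s t : β ⊕ Fin 2) (hs : s = Sum.inr 0) (ht : t = Sum.inr 1)
    (hyper : Finset β → Finset (β ⊕ Fin 2))
    (hhyper : ∀ p : Finset β, hyper p = p.image Sum.inl ∪ {s, t})
    (cutH : Finset (β ⊕ Fin 2) → ℝ)
    (hcut : ∀ A : Finset (β ⊕ Fin 2),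
      cutH A = ∑ p ∈ Ehat, pen (min ((hyper p ∩ A).card) (4 - (hyper p ∩ A).card)))
    (bnd : Finset β → Finset (Finset β))
    (hbnd : ∀ S : Finset β, bnd S = Ehat.filter (fun p => (p ∩ S).card = 1)) :
    (∀ S : Finset β, cutH (S.image Sum.inl ∪ {s})
        = w2 * ((bnd S).card : ℝ) + w1 * ((Ehat.card : ℝ) - ((bnd S).card : ℝ))) ∧
    (∀ S : Finset β,
      (∀ S' : Finset β, (bnd S').card ≤ (bnd S).card) ↔
      (∀ A : Finset (β ⊕ Fin 2), s ∈ A → t ∉ A →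
        cutH (S.image Sum.inl ∪ {s}) ≤ cutH A)) := by
  subst hs ht
  classical
  -- general cut formula for sets containing s but not t
  have hform : ∀ A : Finset (β ⊕ Fin 2), Sum.inr 0 ∈ A → Sum.inr 1 ∉ A →
      cutH A = w2 * ((Ehat.filter (fun p => (p.filter (fun v => Sum.inl v ∈ A)).card = 1)).card : ℝ)
        + w1 * ((Ehat.card : ℝ) - ((Ehat.filter (fun p => (p.filter (fun v => Sum.inl v ∈ A)).card = 1)).card : ℝ)) := by
    intro A hsA htA
    have hterm : ∀ p ∈ Ehat,
        pen (min ((hyper p ∩ A).card) (4 - (hyper p ∩ A).card))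
          = if (p.filter (fun v => Sum.inl v ∈ A)).card = 1 then w2 else w1 := by
      intro p hp
      have hcardint : (hyper p ∩ A).card = (p.filter (fun v => Sum.inl v ∈ A)).card + 1 := by
        rw [hhyper]
        have h1 : (p.image Sum.inl ∪ {Sum.inr 0, Sum.inr 1}) ∩ A
            = (p.filter (fun v => Sum.inl v ∈ A)).image Sum.inl ∪ {Sum.inr 0} := by
          ext x
          simp only [Finset.mem_inter, Finset.mem_union, Finset.mem_image,
            Finset.mem_insert, Finset.mem_singleton, Finset.mem_filter]
          constructor
          · rintro ⟨h1 | h2, hxA⟩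
            · obtain ⟨v, hv, rfl⟩ := h1
              exact Or.inl ⟨v, ⟨hv, hxA⟩, rfl⟩
            · rcases h2 with rfl | rfl
              · exact Or.inr rfl
              · exact absurd hxA htA
          · rintro (⟨v, ⟨hv, hvA⟩, rfl⟩ | rfl)
            · exact ⟨Or.inl ⟨v, hv, rfl⟩, hvA⟩
            · exact ⟨Or.inr (Or.inl rfl), hsA⟩
        rw [h1, Finset.card_union_of_disjoint, Finset.card_image_of_injective _ Sum.inl_injective,
          Finset.card_singleton]
        · simp [Finset.disjoint_singleton_right]
      have hk : (p.filter (fun v => Sum.inl v ∈ A)).card ≤ 2 := by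
        calc (p.filter (fun v => Sum.inl v ∈ A)).card ≤ p.card := Finset.card_filter_le _ _
        _ = 2 := hE p hp
      rw [hcardint]
      set k := (p.filter (fun v => Sum.inl v ∈ A)).card with hkdef
      interval_cases k <;> simp [hpen1, hpen2]
    rw [hcut]
    rw [Finset.sum_congr rfl hterm, Finset.sum_ite]
    have hsplit := Finset.card_filter_add_card_filter_not
      (s := Ehat) (p := fun p => (p.filter (fun v => Sum.inl v ∈ A)).card = 1)
    simp only [Finset.sum_const, nsmul_eq_mul]
    push_cast
    rw [← hsplit]
    push_cast
    ring
  -- formula for S ∪ {s}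
  have hmemS : ∀ S : Finset β, Sum.inr 0 ∈ S.image Sum.inl ∪ ({Sum.inr 0} : Finset (β ⊕ Fin 2)) := by
    intro S; simp
  have hmemT : ∀ S : Finset β, Sum.inr 1 ∉ S.image Sum.inl ∪ ({Sum.inr 0} : Finset (β ⊕ Fin 2)) := by
    intro S; simp
  have hfiltS : ∀ (S p : Finset β),
      p.filter (fun v => Sum.inl v ∈ S.image Sum.inl ∪ ({Sum.inr 0} : Finset (β ⊕ Fin 2))) = p ∩ S := by
    intro S p
    ext v
    simp [Finset.mem_filter, Finset.mem_inter, Sum.inl_injective.eq_iff, and_comm]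
  have hpart1 : ∀ S : Finset β, cutH (S.image Sum.inl ∪ {Sum.inr 0})
      = w2 * ((bnd S).card : ℝ) + w1 * ((Ehat.card : ℝ) - ((bnd S).card : ℝ)) := by
    intro S
    rw [hform _ (hmemS S) (hmemT S), hbnd]
    simp only [hfiltS]
  refine ⟨hpart1, fun S => ?_⟩
  have hbndle : ∀ S' : Finset β, (bnd S').card ≤ Ehat.card := by
    intro S'; rw [hbnd]; exact Finset.card_filter_le _ _
  constructor
  · intro hmax A hsA htA
    rw [hpart1, hform A hsA htA]
    set b := (Ehat.filter (fun p => (p.filter (fun v => Sum.inl v ∈ A)).card = 1)).card with hb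
    have : b = (bnd (Finset.univ.filter (fun v => Sum.inl v ∈ A))).card := by
      rw [hb, hbnd]
      congr 1
      apply Finset.filter_congr
      intro p hp
      have heq : p.filter (fun v => Sum.inl v ∈ A)
          = p ∩ Finset.univ.filter (fun v => Sum.inl v ∈ A) := by
        ext v; simp
      rw [heq]
    rw [this]
    have h1 := hmax (Finset.univ.filter (fun v => Sum.inl v ∈ A))
    have h2 : ((bnd (Finset.univ.filter (fun v => Sum.inl v ∈ A))).card : ℝ) ≤ ((bnd S).card : ℝ) :=
      Nat.cast_le.mpr h1
    nlinarith
  · intro hmin S'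
    have h := hmin (S'.image Sum.inl ∪ {Sum.inr 0}) (hmemS S') (hmemT S')
    rw [hpart1 S, hpart1 S'] at h
    have : ((bnd S').card : ℝ) ≤ ((bnd S).card : ℝ) := by nlinarith
    exact_mod_cast this
end

section
/- Let φ be a Boolean formula in conjunctive normal form over variables x_1, …, x_n. Construct a hypergraph with a node for each literal x_i and each negation ¬x_i, plus a source node s and sink node t; for each i add hyperedges {s, x_i, ¬x_i} with needy node s and {t, x_i, ¬x_i} with needy node t; and for each clause add a hyperedge consisting of the nodes of its literals plus t, with needy node t. Each hyperedge carries the needy-node splitting function: penalty 1 if the needy node is separated from all other nodes of the hyperedge, and 0 otherwise. Then φ is satisfiable if and only if there exists a set S of nodes with s ∈ S and t ∉ S whose total splitting penalty (summed over all hyperedges, where each hyperedge is penalized iff its needy node is on the opposite side of the bipartition {S, complement of S} from all other nodes of that hyperedge) is zero. -/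
/-- The needy-node splitting penalty of a hyperedge `e` with needy node `z`,
with respect to the bipartition induced by a node set `S`: penalty `1` if `z` is
clustered by itself (every other node of `e` lies on the opposite side of the
bipartition from `z`) and `0` otherwise. -/
def needyPenalty {α : Type*} [DecidableEq α] (z : α) (e S : Finset α) : ℝ :=
  if ∀ x ∈ e, x ≠ z → ((x ∈ S) ↔ z ∉ S) then 1 else 0

lemma needyPenalty_nonneg {α : Type*} [DecidableEq α] (z : α) (e S : Finset α) :
    0 ≤ needyPenalty z e S := by
  unfold needyPenalty; split <;> norm_num

lemma needyPenalty_eq_zero {α : Type*} [DecidableEq α] {z : α} {e S : Finset α}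
    (h : ∃ x ∈ e, x ≠ z ∧ ¬((x ∈ S) ↔ z ∉ S)) : needyPenalty z e S = 0 := by
  unfold needyPenalty
  rw [if_neg]
  intro hall
  obtain ⟨x, hx, hxz, hiff⟩ := h
  exact hiff (hall x hx hxz)

lemma needyPenalty_zero_elim {α : Type*} [DecidableEq α] {z : α} {e S : Finset α}
    (h : needyPenalty z e S = 0) : ∃ x ∈ e, x ≠ z ∧ ¬((x ∈ S) ↔ z ∉ S) := by
  unfold needyPenalty at h
  by_contra hc
  push_neg at hc
  rw [if_pos hc] at h
  norm_num at h

/-- the SAT reduction to Needy-Node hypergraph s-t cut.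
Variables are `Fin n`; a literal is a pair `(i, b)` (the variable `x_i` if `b = true`,
its negation if `b = false`); a CNF formula is a finite set of clauses, each a finite
set of literals. Nodes of the hypergraph are `(Fin n × Bool) ⊕ Bool`, with source
`s = Sum.inr false` and sink `t = Sum.inr true`; literal `(i, b)` is the node
`Sum.inl (i, b)`. Hyperedges: for each variable `i`, `{s, x_i, ¬x_i}` with needy
node `s` and `{t, x_i, ¬x_i}` with needy node `t`; for each clause `C`, the nodes
of its literals plus `t`, with needy node `t`. Then the formula is satisfiable iff
there is a set `S` with `s ∈ S`, `t ∉ S` of total splitting penalty zero. -/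
theorem stmt_14 (n : ℕ) (clauses : Finset (Finset (Fin n × Bool))) :
    (∃ a : Fin n → Bool, ∀ C ∈ clauses, ∃ l ∈ C, a l.1 = l.2) ↔
    (∃ S : Finset ((Fin n × Bool) ⊕ Bool),
      Sum.inr false ∈ S ∧ Sum.inr true ∉ S ∧
      (∑ i : Fin n, needyPenalty (Sum.inr false)
          ({Sum.inr false, Sum.inl (i, true), Sum.inl (i, false)} :
            Finset ((Fin n × Bool) ⊕ Bool)) S) +
      (∑ i : Fin n, needyPenalty (Sum.inr true)
          ({Sum.inr true, Sum.inl (i, true), Sum.inl (i, false)} :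
            Finset ((Fin n × Bool) ⊕ Bool)) S) +
      (∑ C ∈ clauses, needyPenalty (Sum.inr true)
          (insert (Sum.inr true) (C.image Sum.inl)) S) = 0) := by
  constructor
  · rintro ⟨a, ha⟩
    -- S = {s} ∪ { literals that are false under a }
    set S0 : Finset ((Fin n × Bool) ⊕ Bool) := insert (Sum.inr false)
      ((Finset.univ.filter (fun p : Fin n × Bool => a p.1 ≠ p.2)).image Sum.inl) with hS0
    refine ⟨S0, ?_, ?_, ?_⟩
    · simp [hS0]
    · simp [hS0]
    · have hmem : ∀ p : Fin n × Bool, (Sum.inl p ∈ S0) ↔ a p.1 ≠ p.2 := by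
        intro p; simp [hS0]
      have hs : (Sum.inr false : (Fin n × Bool) ⊕ Bool) ∈ S0 := by simp [hS0]
      have ht : (Sum.inr true : (Fin n × Bool) ⊕ Bool) ∉ S0 := by simp [hS0]
      have h1 : ∀ i : Fin n, needyPenalty (Sum.inr false)
          ({Sum.inr false, Sum.inl (i, true), Sum.inl (i, false)} :
            Finset ((Fin n × Bool) ⊕ Bool)) S0 = 0 := by
        intro i
        apply needyPenalty_eq_zero
        refine ⟨Sum.inl (i, !(a i)), ?_, by simp, ?_⟩
        · cases a i <;> simp
        · rw [hmem]
          simp only [hs, not_true, iff_false, not_not]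
          cases a i <;> simp
      have h2 : ∀ i : Fin n, needyPenalty (Sum.inr true)
          ({Sum.inr true, Sum.inl (i, true), Sum.inl (i, false)} :
            Finset ((Fin n × Bool) ⊕ Bool)) S0 = 0 := by
        intro i
        apply needyPenalty_eq_zero
        refine ⟨Sum.inl (i, a i), ?_, by simp, ?_⟩
        · cases a i <;> simp
        · rw [hmem]
          simp [ht]
      have h3 : ∀ C ∈ clauses, needyPenalty (Sum.inr true)
          (insert (Sum.inr true) (C.image Sum.inl)) S0 = 0 := by
        intro C hC
        obtain ⟨l, hl, hal⟩ := ha C hC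
        apply needyPenalty_eq_zero
        refine ⟨Sum.inl l, ?_, by simp, ?_⟩
        · exact Finset.mem_insert_of_mem (Finset.mem_image_of_mem _ hl)
        · rw [hmem]
          simp [ht, hal]
      rw [Finset.sum_congr rfl (fun i _ => h1 i), Finset.sum_congr rfl (fun i _ => h2 i),
        Finset.sum_congr rfl h3]
      simp
  · rintro ⟨S, hs, ht, hsum⟩
    have hn1 : 0 ≤ ∑ i : Fin n, needyPenalty (Sum.inr false)
        ({Sum.inr false, Sum.inl (i, true), Sum.inl (i, false)} :
          Finset ((Fin n × Bool) ⊕ Bool)) S :=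
      Finset.sum_nonneg fun i _ => needyPenalty_nonneg _ _ _
    have hn2 : 0 ≤ ∑ i : Fin n, needyPenalty (Sum.inr true)
        ({Sum.inr true, Sum.inl (i, true), Sum.inl (i, false)} :
          Finset ((Fin n × Bool) ⊕ Bool)) S :=
      Finset.sum_nonneg fun i _ => needyPenalty_nonneg _ _ _
    have hn3 : 0 ≤ ∑ C ∈ clauses, needyPenalty (Sum.inr true)
        (insert (Sum.inr true) (C.image Sum.inl)) S :=
      Finset.sum_nonneg fun C _ => needyPenalty_nonneg _ _ _
    have hz1 : ∀ i : Fin n, needyPenalty (Sum.inr false)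
        ({Sum.inr false, Sum.inl (i, true), Sum.inl (i, false)} :
          Finset ((Fin n × Bool) ⊕ Bool)) S = 0 := by
      have : ∑ i : Fin n, needyPenalty (Sum.inr false)
          ({Sum.inr false, Sum.inl (i, true), Sum.inl (i, false)} :
            Finset ((Fin n × Bool) ⊕ Bool)) S = 0 := by linarith
      intro i
      exact (Finset.sum_eq_zero_iff_of_nonneg
        (fun i _ => needyPenalty_nonneg _ _ _)).mp this i (Finset.mem_univ i)
    have hz2 : ∀ i : Fin n, needyPenalty (Sum.inr true)
        ({Sum.inr true, Sum.inl (i, true), Sum.inl (i, false)} :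
          Finset ((Fin n × Bool) ⊕ Bool)) S = 0 := by
      have : ∑ i : Fin n, needyPenalty (Sum.inr true)
          ({Sum.inr true, Sum.inl (i, true), Sum.inl (i, false)} :
            Finset ((Fin n × Bool) ⊕ Bool)) S = 0 := by linarith
      intro i
      exact (Finset.sum_eq_zero_iff_of_nonneg
        (fun i _ => needyPenalty_nonneg _ _ _)).mp this i (Finset.mem_univ i)
    have hz3 : ∀ C ∈ clauses, needyPenalty (Sum.inr true)
        (insert (Sum.inr true) (C.image Sum.inl)) S = 0 := by
      have : ∑ C ∈ clauses, needyPenalty (Sum.inr true)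
          (insert (Sum.inr true) (C.image Sum.inl)) S = 0 := by linarith
      exact fun C hC => (Finset.sum_eq_zero_iff_of_nonneg
        (fun C _ => needyPenalty_nonneg _ _ _)).mp this C hC
    -- from the s-edges: for each i, some literal of variable i lies in S
    have hin : ∀ i : Fin n, Sum.inl (i, true) ∈ S ∨ Sum.inl (i, false) ∈ S := by
      intro i
      obtain ⟨x, hx, hxz, hiff⟩ := needyPenalty_zero_elim (hz1 i)
      simp only [Finset.mem_insert, Finset.mem_singleton] at hx
      rcases hx with rfl | rfl | rfl
      · exact absurd rfl hxz
      · left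
        simp only [hs, not_true, iff_false, not_not] at hiff
        exact hiff
      · right
        simp only [hs, not_true, iff_false, not_not] at hiff
        exact hiff
    refine ⟨fun i => if Sum.inl (i, true) ∈ S then false else true, ?_⟩
    intro C hC
    obtain ⟨x, hx, hxz, hiff⟩ := needyPenalty_zero_elim (hz3 C hC)
    simp only [Finset.mem_insert, Finset.mem_image] at hx
    rcases hx with rfl | ⟨l, hl, rfl⟩
    · exact absurd rfl hxz
    · simp only [ht, not_false_iff, iff_true] at hiff
      refine ⟨l, hl, ?_⟩
      obtain ⟨i, b⟩ := l
      cases b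
      · -- Sum.inl (i,false) ∉ S, need a i = false, i.e. Sum.inl (i,true) ∈ S
        have : Sum.inl (i, true) ∈ S := by
          rcases hin i with h | h
          · exact h
          · exact absurd h hiff
        simp [this]
      · simp [hiff]
end

section
/- Let φ be an instance of Monotone Not-All-Equal 3-SAT over variables x_1, …, x_n: a collection of clauses, each a set of three (unnegated) variables. Construct a hypergraph with a node for each variable plus source s and sink t, and for each clause {x_i, x_j, x_k} add the 5-node hyperedge {s, t, i, j, k} with the cardinality-based splitting function having penalties w_1 = 1 (one node on the small side) and w_2 = 0 (two nodes on the small side). Then φ has an assignment in which every clause contains at least one true and at least one false variable if and only if there exists a set S of nodes with s ∈ S and t ∉ S whose total splitting penalty Σ_e w_e(e ∩ S) is zero. Consequently, detecting a zero-penalty solution for 5-uniform cardinality-based hypergraph s-t cut with w_1 = 1, w_2 = 0 solves Monotone NAE-3SAT. -/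
lemma aux_card_inter (n : ℕ) (C : Finset (Fin n)) (S : Finset (Fin n ⊕ Bool))
    (hs : Sum.inr false ∈ S) (ht : Sum.inr true ∉ S) :
    (({Sum.inr false, Sum.inr true} ∪ C.image Sum.inl : Finset (Fin n ⊕ Bool)) ∩ S).card
      = 1 + (C.filter (fun x => Sum.inl x ∈ S)).card := by
  rw [Finset.union_inter_distrib_right]
  have h1 : ({Sum.inr false, Sum.inr true} : Finset (Fin n ⊕ Bool)) ∩ S = {Sum.inr false} := by
    ext z
    simp only [Finset.mem_inter, Finset.mem_insert, Finset.mem_singleton]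
    constructor
    · rintro ⟨h | h, hz⟩
      · exact h
      · exact absurd (h ▸ hz) ht
    · rintro rfl; exact ⟨Or.inl rfl, hs⟩
  have h2 : (C.image Sum.inl : Finset (Fin n ⊕ Bool)) ∩ S
      = (C.filter (fun x => Sum.inl x ∈ S)).image Sum.inl := by
    ext z
    simp only [Finset.mem_inter, Finset.mem_image, Finset.mem_filter]
    constructor
    · rintro ⟨⟨x, hx, rfl⟩, hz⟩; exact ⟨x, ⟨hx, hz⟩, rfl⟩
    · rintro ⟨x, ⟨hx, hz⟩, rfl⟩; exact ⟨⟨x, hx, rfl⟩, hz⟩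
  rw [h1, h2, Finset.card_union_of_disjoint, Finset.card_singleton,
    Finset.card_image_of_injective _ Sum.inl_injective]
  simp [Finset.disjoint_left]

/-- the Monotone NAE-3SAT reduction. Variables are `Fin n`; each clause
is a 3-element set of variables. Nodes of the hypergraph are `Fin n ⊕ Bool`, with
source `s = Sum.inr false` and sink `t = Sum.inr true`. Each clause `C` yields the
5-node hyperedge `{s, t} ∪ C` with cardinality-based penalties `w₁ = 1`, `w₂ = 0`
(penalty `1` exactly when one node is on the small side of the split). Then the
formula has a not-all-equal assignment iff some `S` with `s ∈ S`, `t ∉ S` has total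
splitting penalty zero. -/
theorem stmt_15 (n : ℕ) (clauses : Finset (Finset (Fin n)))
    (hC : ∀ C ∈ clauses, C.card = 3) :
    (∃ a : Fin n → Bool, ∀ C ∈ clauses,
      (∃ x ∈ C, a x = true) ∧ (∃ x ∈ C, a x = false)) ↔
    (∃ S : Finset (Fin n ⊕ Bool),
      Sum.inr false ∈ S ∧ Sum.inr true ∉ S ∧
      ∑ C ∈ clauses,
        (if min ((({Sum.inr false, Sum.inr true} ∪ C.image Sum.inl : Finset (Fin n ⊕ Bool)) ∩ S).card)
              (5 - (({Sum.inr false, Sum.inr true} ∪ C.image Sum.inl : Finset (Fin n ⊕ Bool)) ∩ S).card) = 1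
         then (1 : ℝ) else 0) = 0) := by
  constructor
  · rintro ⟨a, ha⟩
    refine ⟨insert (Sum.inr false) ((Finset.univ.filter (fun x => a x = true)).image Sum.inl),
      Finset.mem_insert_self _ _, by simp, Finset.sum_eq_zero fun C hc => ?_⟩
    set S : Finset (Fin n ⊕ Bool) :=
      insert (Sum.inr false) ((Finset.univ.filter (fun x => a x = true)).image Sum.inl) with hS
    have hs : Sum.inr false ∈ S := Finset.mem_insert_self _ _
    have ht : Sum.inr true ∉ S := by simp [hS]
    rw [aux_card_inter n C S hs ht]
    have hfilt : C.filter (fun x => Sum.inl x ∈ S) = C.filter (fun x => a x = true) := by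
      apply Finset.filter_congr
      intro x hx
      simp [hS]
    rw [hfilt]
    set k := (C.filter (fun x => a x = true)).card with hk
    have hk3 : k ≤ 3 := hC C hc ▸ Finset.card_filter_le C _
    have hk1 : 1 ≤ k := by
      obtain ⟨⟨x, hx, hax⟩, -⟩ := ha C hc
      exact Finset.card_pos.mpr ⟨x, Finset.mem_filter.mpr ⟨hx, hax⟩⟩
    have hklt : k < 3 := by
      obtain ⟨-, y, hy, hay⟩ := ha C hc
      have hc3 := hC C hc
      rcases lt_or_eq_of_le hk3 with h | h
      · exact h
      · exfalso
        have : C.filter (fun x => a x = true) = C :=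
          Finset.eq_of_subset_of_card_le (Finset.filter_subset _ _) (by omega)
        have := this ▸ Finset.mem_filter.mp (this.symm ▸ hy)
        simp [hay] at this
    have : min (1 + k) (5 - (1 + k)) ≠ 1 := by omega
    simp [this]
  · rintro ⟨S, hs, ht, hsum⟩
    refine ⟨fun x => Sum.inl x ∈ S, fun C hc => ?_⟩
    have hterm : ∀ C ∈ clauses,
        (if min ((({Sum.inr false, Sum.inr true} ∪ C.image Sum.inl : Finset (Fin n ⊕ Bool)) ∩ S).card)
              (5 - (({Sum.inr false, Sum.inr true} ∪ C.image Sum.inl : Finset (Fin n ⊕ Bool)) ∩ S).card) = 1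
         then (1 : ℝ) else 0) = 0 := by
      rw [← Finset.sum_eq_zero_iff_of_nonneg (fun C _ => by positivity)]
      exact hsum
    have h0 := hterm C hc
    rw [aux_card_inter n C S hs ht] at h0
    set k := (C.filter (fun x => Sum.inl x ∈ S)).card with hk
    have hk3 : k ≤ 3 := hC C hc ▸ Finset.card_filter_le C _
    have hne : min (1 + k) (5 - (1 + k)) ≠ 1 := by
      intro h; rw [if_pos h] at h0; norm_num at h0
    have hk1 : 1 ≤ k ∧ k < 3 := by omega
    constructor
    · obtain ⟨x, hx⟩ := Finset.card_pos.mp (by omega : 0 < k)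
      obtain ⟨hxC, hxS⟩ := Finset.mem_filter.mp hx
      exact ⟨x, hxC, by simpa using hxS⟩
    · by_contra h
      push_neg at h
      have : C.filter (fun x => Sum.inl x ∈ S) = C := by
        apply Finset.filter_true_of_mem
        intro x hx
        simpa using h x hx
      rw [this] at hk
      have hc3 := hC C hc
      omega
end

section
/- Let e be a finite set of r ≥ 3 nodes and let m : 2^e → ℝ be defined by m(S) = m_{|S|} for reals m_0 = 0, m_1, …, m_{r−1}, m_r with m_r = m_{r−2}. If m is submodular, then the penalties satisfy: (i) 2m_1 ≥ m_2; (ii) 2m_j ≥ m_{j−1} + m_{j+1} for all j with 2 ≤ j ≤ r−3; and (iii) m_j ≤ m_{j+1} for all j with 1 ≤ j ≤ r−2. -/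
/-!
Submodularity of `S ↦ m |S|`, tested on the two sets obtained by deleting one of two points from
a set of size `i + 2`, says exactly that `m` is concave at `i + 1`. Hence the increments
`m (j + 1) - m j` decrease, and `m r = m (r - 2)` together with concavity at `r - 1` forces the
increment `m (r - 1) - m (r - 2)`, and with it all earlier ones, to be nonnegative.
-/

open Finset

theorem concave_of_submodular_card {α β : Type*} [Fintype α] [DecidableEq α] [Add β] [LE β]
    {m : ℕ → β} (hsub : ∀ A B : Finset α, m #(A ∩ B) + m #(A ∪ B) ≤ m #A + m #B)
    {i : ℕ} (hi : i + 2 ≤ Fintype.card α) : m i + m (i + 2) ≤ m (i + 1) + m (i + 1) := by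
  obtain ⟨C, -, hC⟩ := exists_subset_card_eq (s := (univ : Finset α)) (n := i + 2)
    (by rwa [card_univ])
  obtain ⟨x, hx, y, hy, hxy⟩ := one_lt_card.mp (by omega : 1 < #C)
  have hunion : C.erase x ∪ C.erase y = C := by
    ext z
    simp only [mem_union, mem_erase]
    grind
  have herase : ∀ z ∈ C, #(C.erase z) = i + 1 := fun z hz => by
    rw [card_erase_of_mem hz, hC]; rfl
  have hinter : #(C.erase x ∩ C.erase y) = i := by
    have := card_union_add_card_inter (C.erase x) (C.erase y)
    rw [hunion, hC, herase x hx, herase y hy] at this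
    omega
  simpa only [hinter, hunion, hC, herase x hx, herase y hy] using hsub (C.erase x) (C.erase y)

section ConcaveSequence

variable {β : Type*} [AddCommGroup β] [LinearOrder β] [IsOrderedAddMonoid β] {g : ℕ → β}

theorem antitoneOn_sub_of_concave {n : ℕ}
    (hg : ∀ i, i + 2 ≤ n → g i + g (i + 2) ≤ g (i + 1) + g (i + 1)) :
    AntitoneOn (fun i => g (i + 1) - g i) (Set.Iio n) := by
  refine antitoneOn_of_add_one_le Set.ordConnected_Iio fun a _ _ ha => ?_
  rw [sub_le_sub_iff, add_comm]
  exact hg a ha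

theorem le_succ_of_concave_of_eq {k : ℕ}
    (hg : ∀ i, i + 2 ≤ k + 2 → g i + g (i + 2) ≤ g (i + 1) + g (i + 1))
    (hk : g (k + 2) = g k) {j : ℕ} (hj : j ≤ k) : g j ≤ g (j + 1) := by
  have hlast : g k ≤ g (k + 1) := le_of_not_gt fun h => by
    have := hg k le_rfl
    rw [hk] at this
    exact (add_lt_add h h).not_ge this
  rw [← sub_nonneg] at hlast ⊢
  exact hlast.trans <| antitoneOn_sub_of_concave hg (by simp only [Set.mem_Iio]; omega)
    (by simp only [Set.mem_Iio]; omega) hj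

end ConcaveSequence

/-- if the function `m(S) = m_{|S|}` on subsets of an `r`-node set
(`r ≥ 3`), with `m 0 = 0` and `m r = m_{r-2}`, is submodular, then
`2m₁ ≥ m₂`, `2m_j ≥ m_{j-1} + m_{j+1}` for `2 ≤ j ≤ r-3`, and
`m_j ≤ m_{j+1}` for `1 ≤ j ≤ r-2`. -/
theorem stmt_16 {α : Type*} [Fintype α] [DecidableEq α] (r : ℕ) (hr : 3 ≤ r)
    (hcard : Fintype.card α = r)
    (m : ℕ → ℝ) (hm0 : m 0 = 0) (hmr : m r = m (r - 2))
    (f : Finset α → ℝ) (hf : ∀ S : Finset α, f S = m S.card)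
    (hsub : ∀ A B : Finset α, f (A ∩ B) + f (A ∪ B) ≤ f A + f B) :
    2 * m 1 ≥ m 2 ∧
    (∀ j : ℕ, 2 ≤ j → j ≤ r - 3 → 2 * m j ≥ m (j - 1) + m (j + 1)) ∧
    (∀ j : ℕ, 1 ≤ j → j ≤ r - 2 → m j ≤ m (j + 1)) := by
  have hconc : ∀ i, i + 2 ≤ r → m i + m (i + 2) ≤ m (i + 1) + m (i + 1) := fun i hi =>
    concave_of_submodular_card (fun A B => by simpa only [hf] using hsub A B) (hcard ▸ hi)
  obtain ⟨k, rfl⟩ : ∃ k, r = k + 2 := ⟨r - 2, by omega⟩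
  refine ⟨?_, fun j hj2 hjr => ?_, fun j _ hjr => ?_⟩
  · linarith [hconc 0 (by omega)]
  · obtain ⟨i, rfl⟩ : ∃ i, j = i + 1 := ⟨j - 1, by omega⟩
    rw [Nat.add_sub_cancel]
    linarith [hconc i (by omega)]
  · exact le_succ_of_concave_of_eq hconc (by simpa using hmr) (by omega)
end
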